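/- arXiv:2410.15538 — 7 statements merged into one kernel-verified Lean document; each statement's English description precedes it below -/
import Mathlib

section
/- Let F be a field of characteristic ≠ 2 and let T = [t_{ij}] be a strictly lower triangular n×n matrix over F. In the commutative F-algebra A(T) generated by X_1,…,X_n subject to X_1² = 0 and X_i² = Σ_{j<i} t_{ij} X_j X_i for 2 ≤ i ≤ n, every generator X_i is nilpotent; in fact X_i^{n+1} = 0 for each i. -/
/-!
Let `I k` be the ideal generated by `X 0, …, X (k-1)` and `J = (X k)`. The defining relation says
`X k ^ 2 ∈ X k • I k`, i.e. `J ^ 2 ≤ J * I k`, and for such a pair of ideals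
`(I ⊔ J) ^ (m + 1) ≤ I ^ (m + 1) ⊔ J * I ^ m`. Hence `I k ^ (k + 1) = 0` propagates to
`I (k + 1) ^ (k + 2) = 0`, and finally `X i ^ (n + 1) ∈ I n ^ (n + 1) = 0`.
-/

open scoped BigOperators

noncomputable section

variable {F : Type} [Field F]

/-- `T` is strictly lower triangular. -/
def SLT {n : ℕ} (T : Matrix (Fin n) (Fin n) F) : Prop :=
  ∀ i j : Fin n, i ≤ j → T i j = 0

/-- The ideal of relations defining the nil graded algebra `A(T)`:
`X i ^ 2 = ∑ j < i, T i j * X j * X i` (for `i = 0` the sum is empty, giving `X 0 ^ 2 = 0`). -/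
def ntIdeal {n : ℕ} (T : Matrix (Fin n) (Fin n) F) : Ideal (MvPolynomial (Fin n) F) :=
  Ideal.span {p | ∃ i : Fin n,
    p = MvPolynomial.X i ^ 2 -
      ∑ j ∈ Finset.univ.filter (fun j => j < i),
        MvPolynomial.C (T i j) * MvPolynomial.X j * MvPolynomial.X i}

/-- The nil graded algebra `A(T)` associated to the strictly lower triangular matrix `T`. -/
abbrev NTAlg {n : ℕ} (T : Matrix (Fin n) (Fin n) F) : Type :=
  MvPolynomial (Fin n) F ⧸ ntIdeal T

/-- The generator `X i` of `A(T)`. -/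
def ntGen {n : ℕ} (T : Matrix (Fin n) (Fin n) F) (i : Fin n) : NTAlg T :=
  Ideal.Quotient.mk (ntIdeal T) (MvPolynomial.X i)

/-- There is a degree-preserving isomorphism `A(T) → A(S)`, i.e. an algebra isomorphism
sending each generator to an `F`-linear combination of the generators of the target. -/
def NTIso {n : ℕ} (T S : Matrix (Fin n) (Fin n) F) : Prop :=
  ∃ e : NTAlg T ≃ₐ[F] NTAlg S, ∃ Γ : Matrix (Fin n) (Fin n) F,
    ∀ j : Fin n, e (ntGen T j) = ∑ i : Fin n, Γ i j • ntGen S i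

namespace Ideal

variable {R : Type*} [CommSemiring R]

theorem sup_pow_succ_le_of_sq_le {I J : Ideal R} (hJ : J ^ 2 ≤ J * I) (m : ℕ) :
    (I ⊔ J) ^ (m + 1) ≤ I ^ (m + 1) ⊔ J * I ^ m := by
  induction m with
  | zero => simp
  | succ m ih =>
    have hJJ : J ^ 2 * I ^ m ≤ J * I ^ (m + 1) :=
      calc J ^ 2 * I ^ m ≤ J * I * I ^ m := mul_le_mul_left hJ _
        _ = J * I ^ (m + 1) := by ring
    calc (I ⊔ J) ^ (m + 1 + 1) = (I + J) * (I + J) ^ (m + 1) := pow_succ' _ _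
      _ ≤ (I + J) * (I ^ (m + 1) + J * I ^ m) := mul_le_mul_right ih _
      _ = I ^ (m + 1 + 1) + J * I ^ (m + 1) + (J * I ^ (m + 1) + J ^ 2 * I ^ m) := by ring
      _ ≤ I ^ (m + 1 + 1) ⊔ J * I ^ (m + 1) :=
        sup_le le_rfl (sup_le le_sup_right (hJJ.trans le_sup_right))

theorem sup_pow_eq_bot_of_sq_le {I J : Ideal R} (hJ : J ^ 2 ≤ J * I) {m : ℕ}
    (hI : I ^ (m + 1) = ⊥) : (I ⊔ J) ^ (m + 2) = ⊥ :=
  eq_bot_iff.mpr <| (sup_pow_succ_le_of_sq_le hJ (m + 1)).trans <| by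
    simp [pow_succ, hI]

theorem span_range_pow_eq_bot_of_sq_mem {n : ℕ} (x : Fin n → R)
    (hx : ∀ i, x i ^ 2 ∈ span {x i} * span (x '' Set.Iio i)) :
    span (Set.range x) ^ (n + 1) = ⊥ := by
  induction n with
  | zero => simp [Set.range_eq_empty]
  | succ n ih =>
    rw [← Fin.snoc_init_self x, Fin.range_snoc, span_insert, sup_comm]
    refine sup_pow_eq_bot_of_sq_le ?_ (ih _ fun i => ?_)
    · have hlast : Set.range (Fin.init x) = x '' Set.Iio (Fin.last n) :=
        calc Set.range (Fin.init x) = x '' Set.range Fin.castSucc := Set.range_comp x _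
          _ = x '' Set.Iio (Fin.last n) := by congr 1; ext; simp [Fin.lt_def]
      rw [span_singleton_pow, span_singleton_le_iff_mem, hlast]
      exact hx (Fin.last n)
    · have := hx i.castSucc
      rwa [← Fin.image_castSucc_Iio, Set.image_image] at this

end Ideal

theorem ntGen_sq {n : ℕ} (T : Matrix (Fin n) (Fin n) F) (i : Fin n) :
    ntGen T i ^ 2 = ∑ j ∈ Finset.univ.filter (· < i), T i j • ntGen T j * ntGen T i := by
  have hrel : MvPolynomial.X i ^ 2 - ∑ j ∈ Finset.univ.filter (· < i),
      MvPolynomial.C (T i j) * MvPolynomial.X j * MvPolynomial.X i ∈ ntIdeal T :=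
    Ideal.subset_span ⟨i, rfl⟩
  rw [← Ideal.Quotient.eq_zero_iff_mem, map_sub, sub_eq_zero, map_pow, map_sum] at hrel
  refine hrel.trans (Finset.sum_congr rfl fun j _ => ?_)
  rw [map_mul, map_mul, ← MvPolynomial.algebraMap_eq, Ideal.Quotient.mk_algebraMap,
    ← Algebra.smul_def]
  rfl

theorem ntGen_sq_mem {n : ℕ} (T : Matrix (Fin n) (Fin n) F) (i : Fin n) :
    ntGen T i ^ 2 ∈ Ideal.span {ntGen T i} * Ideal.span (ntGen T '' Set.Iio i) := by
  refine Ideal.mem_span_singleton_mul.mpr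
    ⟨∑ j ∈ Finset.univ.filter (· < i), T i j • ntGen T j, ?_, ?_⟩
  · refine Ideal.sum_mem _ fun j hj => Submodule.smul_of_tower_mem _ _ (Ideal.subset_span ?_)
    exact ⟨j, (Finset.mem_filter.mp hj).2, rfl⟩
  · rw [ntGen_sq, Finset.mul_sum]
    exact Finset.sum_congr rfl fun _ _ => mul_comm _ _

theorem stmt0_general {n : ℕ} (T : Matrix (Fin n) (Fin n) F)
    (i : Fin n) :
    IsNilpotent (ntGen T i) ∧ ntGen T i ^ (n + 1) = 0 := by
  have hpow : ntGen T i ^ (n + 1) = 0 := by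
    rw [← Ideal.mem_bot, ← Ideal.span_range_pow_eq_bot_of_sq_mem (ntGen T) (ntGen_sq_mem T)]
    exact Ideal.pow_mem_pow (Ideal.subset_span (Set.mem_range_self i)) _
  exact ⟨⟨n + 1, hpow⟩, hpow⟩

/-- Every generator of `A(T)` is nilpotent; in fact `X i ^ (n + 1) = 0`. -/
theorem stmt0 {n : ℕ} (h2 : (2 : F) ≠ 0) (T : Matrix (Fin n) (Fin n) F) (hT : SLT T)
    (i : Fin n) :
    IsNilpotent (ntGen T i) ∧ ntGen T i ^ (n + 1) = 0 :=
  stmt0_general T i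
end
end

section
/- Let F be a field of characteristic ≠ 2 and T a strictly lower triangular n×n matrix over F. Then the algebra A(T) has F-dimension 2^n, and the set of monomials {X_1^{a_1} ⋯ X_n^{a_n} : a_i ∈ {0,1}} is an F-basis of A(T). -/
/-!
Adjoining the last generator is a quadratic extension. Write `T'` for the leading minor of `T`
and `s = ∑ j, T (last) j • X j ∈ A(T')`. The last relation reads `X_last ^ 2 = s * X_last`, and
no other relation involves `X_last`, so `A(T) ≅ A(T')[Y] / (Y ^ 2 - s * Y)`. This quadratic is
monic, so `1, Y` is a basis over `A(T')`; induction on `n` and bases of towers then show that the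
square-free monomials form a basis of `A(T)`.
-/

open scoped BigOperators

noncomputable section

variable {F : Type} [Field F]

namespace Fin

def finsetSuccEquiv (n : ℕ) : Finset (Fin n) × Fin 2 ≃ Finset (Fin (n + 1)) where
  toFun p := p.1.map castSuccEmb ∪ if p.2 = 1 then {last n} else ∅
  invFun t := (t.preimage castSucc (castSucc_injective n).injOn, if last n ∈ t then 1 else 0)
  left_inv := by
    rintro ⟨s, k⟩
    ext1
    · ext j
      by_cases hk : k = 1 <;> simp [hk, castSucc_ne_last]
    · fin_cases k <;> simp
  right_inv t := by
    ext j
    induction j using lastCases with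
    | last => by_cases h : last n ∈ t <;> simp [h]
    | cast j => by_cases h : last n ∈ t <;> simp [h, castSucc_ne_last]

theorem prod_finsetSuccEquiv {M : Type*} [CommMonoid M] {n : ℕ} (f : Fin (n + 1) → M)
    (s : Finset (Fin n)) (k : Fin 2) :
    ∏ i ∈ finsetSuccEquiv n (s, k), f i = (∏ i ∈ s, f i.castSucc) * f (last n) ^ (k : ℕ) := by
  have hdisj : Disjoint (s.map castSuccEmb) (if k = 1 then {last n} else ∅) := by
    split_ifs <;> simp [castSucc_ne_last]
  rw [finsetSuccEquiv, Equiv.coe_fn_mk, Finset.prod_union hdisj, Finset.prod_map]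
  fin_cases k <;> simp

end Fin

theorem AdjoinRoot.exists_basis_root_pow {R : Type*} [CommRing R] {f : Polynomial R}
    (hf : f.Monic) {d : ℕ} (hd : f.natDegree = d) :
    ∃ b : Module.Basis (Fin d) R (AdjoinRoot f), ∀ k, b k = AdjoinRoot.root f ^ (k : ℕ) :=
  ⟨(AdjoinRoot.powerBasis' hf).basis.reindex (finCongr hd), fun k => by simp [finCongr]⟩

namespace NTAlg

open MvPolynomial Finset

variable {n : ℕ}

section Presentation

variable (T : Matrix (Fin n) (Fin n) F) {A : Type*} [CommRing A] [Algebra F A]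

theorem ntGen_sq (i : Fin n) :
    ntGen T i ^ 2 = ∑ j ∈ Iio i, algebraMap F (NTAlg T) (T i j) * ntGen T j * ntGen T i := by
  have hrel : X i ^ 2 - ∑ j ∈ Iio i, C (T i j) * X j * X i ∈ ntIdeal T :=
    Ideal.subset_span ⟨i, by rw [filter_gt_eq_Iio]⟩
  have h := Ideal.Quotient.eq_zero_iff_mem.2 hrel
  rw [← Ideal.Quotient.mkₐ_eq_mk F, map_sub, map_pow, map_sum, sub_eq_zero] at h
  simp only [map_mul, algHom_C] at h
  exact h

def lift (v : Fin n → A)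
    (hv : ∀ i, v i ^ 2 = ∑ j ∈ Iio i, algebraMap F A (T i j) * v j * v i) :
    NTAlg T →ₐ[F] A :=
  Ideal.Quotient.liftₐ _ (aeval v) fun _ hp => RingHom.mem_ker.1 <| by
    refine Ideal.span_le.2 ?_ hp
    rintro _ ⟨i, rfl⟩
    simp [filter_gt_eq_Iio, hv i]

@[simp]
theorem lift_ntGen (v : Fin n → A) (hv) (i : Fin n) : lift T v hv (ntGen T i) = v i :=
  aeval_X v i

variable {T} in
theorem algHom_ext {f g : NTAlg T →ₐ[F] A} (h : ∀ i, f (ntGen T i) = g (ntGen T i)) : f = g :=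
  Ideal.Quotient.algHom_ext F (MvPolynomial.algHom_ext h)

theorem map_ntGen_sq (f : NTAlg T →ₐ[F] A) (i : Fin n) :
    f (ntGen T i) ^ 2 = ∑ j ∈ Iio i, algebraMap F A (T i j) * f (ntGen T j) * f (ntGen T i) := by
  simpa using congrArg f (ntGen_sq T i)

end Presentation

def equivBaseField (T : Matrix (Fin 0) (Fin 0) F) : NTAlg T ≃ₐ[F] F :=
  AlgEquiv.ofAlgHom (lift T Fin.elim0 fun i => i.elim0) (Algebra.ofId F _)
    (Subsingleton.elim _ _) (algHom_ext fun i => i.elim0)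

section LastGenerator

variable (T : Matrix (Fin (n + 1)) (Fin (n + 1)) F)

abbrev leadingMinor : Matrix (Fin n) (Fin n) F := T.submatrix Fin.castSucc Fin.castSucc

def lastRowForm : NTAlg (leadingMinor T) :=
  ∑ j, algebraMap F _ (T (Fin.last n) j.castSucc) * ntGen (leadingMinor T) j

def lastQuadratic : Polynomial (NTAlg (leadingMinor T)) :=
  Polynomial.X ^ 2 - Polynomial.C (lastRowForm T) * Polynomial.X

theorem lastQuadratic_monic : (lastQuadratic T).Monic :=
  Polynomial.monic_X_pow_sub (Polynomial.degree_C_mul_X_le _ |>.trans_lt (by norm_num))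

theorem natDegree_lastQuadratic [Nontrivial (NTAlg (leadingMinor T))] :
    (lastQuadratic T).natDegree = 2 := by
  rw [lastQuadratic, Polynomial.natDegree_sub_eq_left_of_natDegree_lt] <;>
    simp [(Polynomial.natDegree_C_mul_le _ _).trans Polynomial.natDegree_X_le]

theorem root_lastQuadratic_sq :
    AdjoinRoot.root (lastQuadratic T) ^ 2 =
      AdjoinRoot.of _ (lastRowForm T) * AdjoinRoot.root (lastQuadratic T) := by
  rw [← sub_eq_zero, ← AdjoinRoot.mk_X, ← AdjoinRoot.mk_C, ← map_pow, ← map_mul, ← map_sub]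
  exact AdjoinRoot.mk_self

def ofLeadingMinor : NTAlg (leadingMinor T) →ₐ[F] NTAlg T :=
  lift _ (fun j => ntGen T j.castSucc) fun i => by
    rw [ntGen_sq, Fin.sum_Iio_castSucc]
    rfl

theorem ntGen_last_sq :
    ntGen T (Fin.last n) ^ 2 = ofLeadingMinor T (lastRowForm T) * ntGen T (Fin.last n) := by
  simp [ntGen_sq, lastRowForm, ofLeadingMinor, Fin.Iio_last_eq_map, sum_mul]

def toAdjoinRoot : NTAlg T →ₐ[F] AdjoinRoot (lastQuadratic T) :=
  lift T (Fin.lastCases (AdjoinRoot.root _) fun j => AdjoinRoot.of _ (ntGen _ j)) fun i => by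
    induction i using Fin.lastCases with
    | last =>
      rw [Fin.lastCases_last, root_lastQuadratic_sq, lastRowForm, map_sum, sum_mul]
      simp [Fin.Iio_last_eq_map, AdjoinRoot.algebraMap_eq,
        IsScalarTower.algebraMap_apply F (NTAlg (leadingMinor T)) (AdjoinRoot (lastQuadratic T))]
    | cast i =>
      simp only [Fin.lastCases_castSucc, Fin.sum_Iio_castSucc]
      exact map_ntGen_sq _ (AdjoinRoot.ofAlgHom F _) i

def ofAdjoinRoot : AdjoinRoot (lastQuadratic T) →ₐ[F] NTAlg T :=
  AdjoinRoot.liftAlgHom _ (ofLeadingMinor T) (ntGen T (Fin.last n)) <| by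
    simp [lastQuadratic, ntGen_last_sq]

def equivAdjoinRoot : NTAlg T ≃ₐ[F] AdjoinRoot (lastQuadratic T) :=
  AlgEquiv.ofAlgHom (toAdjoinRoot T) (ofAdjoinRoot T)
    (AdjoinRoot.algHom_ext'
      (algHom_ext fun j => by simp [toAdjoinRoot, ofAdjoinRoot, ofLeadingMinor])
      (by simp [toAdjoinRoot, ofAdjoinRoot]))
    (algHom_ext fun i => by
      induction i using Fin.lastCases <;> simp [toAdjoinRoot, ofAdjoinRoot, ofLeadingMinor])

end LastGenerator

theorem exists_basis_prod_ntGen (T : Matrix (Fin n) (Fin n) F) :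
    ∃ b : Module.Basis (Finset (Fin n)) F (NTAlg T), ∀ s, b s = ∏ i ∈ s, ntGen T i := by
  induction n with
  | zero =>
    refine ⟨(Module.Basis.singleton _ F).map (equivBaseField T).symm.toLinearEquiv, fun s => ?_⟩
    simp [Subsingleton.elim s ∅]
  | succ n ih =>
    obtain ⟨bA, hbA⟩ := ih (leadingMinor T)
    have : Nontrivial (NTAlg (leadingMinor T)) := ⟨⟨bA ∅, 0, bA.ne_zero ∅⟩⟩
    obtain ⟨c, hc⟩ := AdjoinRoot.exists_basis_root_pow (lastQuadratic_monic T)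
      (natDegree_lastQuadratic T)
    refine ⟨((bA.smulTower c).map (equivAdjoinRoot T).symm.toLinearEquiv).reindex
      (Fin.finsetSuccEquiv n), fun t => ?_⟩
    obtain ⟨⟨s, k⟩, rfl⟩ := (Fin.finsetSuccEquiv n).surjective t
    simp [Fin.prod_finsetSuccEquiv, hbA, hc, equivAdjoinRoot, ofAdjoinRoot, ofLeadingMinor,
      Algebra.smul_def]

end NTAlg

theorem stmt1_general {n : ℕ} (T : Matrix (Fin n) (Fin n) F) :
    Module.finrank F (NTAlg T) = 2 ^ n ∧
    ∃ b : Module.Basis (Finset (Fin n)) F (NTAlg T), ∀ s : Finset (Fin n), b s = ∏ i ∈ s, ntGen T i := by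
  obtain ⟨b, hb⟩ := NTAlg.exists_basis_prod_ntGen T
  refine ⟨?_, b, hb⟩
  rw [Module.finrank_eq_card_basis b, Fintype.card_finset, Fintype.card_fin]

/-- `A(T)` has dimension `2 ^ n`, with basis the square-free monomials in the generators. -/
theorem stmt1 {n : ℕ} (h2 : (2 : F) ≠ 0) (T : Matrix (Fin n) (Fin n) F) (hT : SLT T) :
    Module.finrank F (NTAlg T) = 2 ^ n ∧
    ∃ b : Module.Basis (Finset (Fin n)) F (NTAlg T), ∀ s : Finset (Fin n), b s = ∏ i ∈ s, ntGen T i :=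
  stmt1_general T
end
end

section
/- Let F be a field of characteristic ≠ 2 and T = [t_{rk}] a strictly lower triangular n×n matrix over F. Fix 1 ≤ r₁ < r₂ ≤ n and suppose t_{r₂ j} = 0 for all j ≥ r₁ and t_{r r₁} = 0 for all r₁ < r < r₂. Let S be the matrix obtained from T by exchanging rows r₁ and r₂ and exchanging columns r₁ and r₂. Then A(T) ≅ A(S) as F-algebras, via the isomorphism swapping X_{r₁} ↔ Y_{r₂} and X_{r₂} ↔ Y_{r₁} and fixing the other generators. -/
open scoped BigOperators

noncomputable section

variable {F : Type} [Field F]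

/-!
Relabelling the generators by `σ = (r₁ r₂)` sends the relation
`X i ^ 2 = ∑_{j < i} t_{ij} X_j X_i` of `A(T)` to the relation of `A(S)` at `σ i`, provided `σ`
keeps `j < i` for every pair with `t_{ij} ≠ 0`. For a transposition the only pairs whose order
it reverses are `(r₁, r₂)` and the pairs `(r₁, r)`, `(r, r₂)` with `r₁ < r < r₂`; these are
exactly the entries the hypotheses make vanish.
-/

namespace NTAlg

open MvPolynomial

variable {n : ℕ}

def rel (T : Matrix (Fin n) (Fin n) F) (i : Fin n) : MvPolynomial (Fin n) F :=
  X i ^ 2 - ∑ j ∈ Finset.univ.filter (fun j => j < i), C (T i j) * X j * X i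

lemma ntIdeal_eq_span_range_rel (T : Matrix (Fin n) (Fin n) F) :
    ntIdeal T = Ideal.span (Set.range (rel T)) := by
  simp only [ntIdeal, rel, Set.range, eq_comm]

variable {T S : Matrix (Fin n) (Fin n) F} {σ : Equiv.Perm (Fin n)}

lemma rename_rel (hS : ∀ a b, S (σ a) (σ b) = T a b)
    (hσ : ∀ a b, T a b ≠ 0 → (b < a ↔ σ b < σ a)) (i : Fin n) :
    rename σ (rel T i) = rel S (σ i) := by
  simp only [rel, map_sub, map_pow, map_sum, map_mul, rename_X, rename_C]
  congr 1
  rw [Finset.sum_filter, Finset.sum_filter]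
  refine Fintype.sum_equiv σ _ _ fun j => ?_
  rw [hS]
  by_cases hT : T i j = 0
  · simp [hT]
  · simp only [hσ i j hT]

lemma map_ntIdeal (hS : ∀ a b, S (σ a) (σ b) = T a b)
    (hσ : ∀ a b, T a b ≠ 0 → (b < a ↔ σ b < σ a)) :
    (ntIdeal T).map (rename σ : MvPolynomial (Fin n) F →ₐ[F] _) = ntIdeal S := by
  rw [ntIdeal_eq_span_range_rel, ntIdeal_eq_span_range_rel, Ideal.map_span, ← Set.range_comp]
  simp only [Function.comp_def, rename_rel hS hσ]
  exact congrArg _ (σ.surjective.range_comp (rel S))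

def equivOfPerm (σ : Equiv.Perm (Fin n)) (hS : ∀ a b, S (σ a) (σ b) = T a b)
    (hσ : ∀ a b, T a b ≠ 0 → (b < a ↔ σ b < σ a)) : NTAlg T ≃ₐ[F] NTAlg S :=
  Ideal.quotientEquivAlg _ _ (renameEquiv F σ) (map_ntIdeal hS hσ).symm

lemma equivOfPerm_ntGen (hS : ∀ a b, S (σ a) (σ b) = T a b)
    (hσ : ∀ a b, T a b ≠ 0 → (b < a ↔ σ b < σ a)) (i : Fin n) :
    equivOfPerm σ hS hσ (ntGen T i) = ntGen S (σ i) :=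
  congrArg (Ideal.Quotient.mk _) (rename_X σ i)

end NTAlg

lemma SLT.lt_of_ne_zero {n : ℕ} {T : Matrix (Fin n) (Fin n) F} (hT : SLT T) {a b : Fin n}
    (hab : T a b ≠ 0) : b < a :=
  lt_of_not_ge fun h => hab (hT a b h)

lemma swap_lt_swap_of_ne_zero {n : ℕ} {T : Matrix (Fin n) (Fin n) F} (hT : SLT T)
    {r₁ r₂ : Fin n} (h12 : r₁ < r₂)
    (hrow : ∀ j : Fin n, r₁ ≤ j → T r₂ j = 0)
    (hcol : ∀ r : Fin n, r₁ < r → r < r₂ → T r r₁ = 0)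
    {a b : Fin n} (hab : T a b ≠ 0) :
    Equiv.swap r₁ r₂ b < Equiv.swap r₁ r₂ a := by
  have hba := hT.lt_of_ne_zero hab
  have hrow' : a = r₂ → b < r₁ := by
    rintro rfl
    exact lt_of_not_ge fun h => hab (hrow b h)
  have hcol' : b = r₁ → r₂ < a := by
    rintro rfl
    have ha2 : a ≠ r₂ := fun h => hab (h ▸ hrow b le_rfl)
    exact lt_of_not_ge fun h => hab (hcol a hba (lt_of_le_of_ne h ha2))
  rw [Equiv.swap_apply_def, Equiv.swap_apply_def]
  split_ifs <;> grind

theorem stmt5_general {n : ℕ} (T : Matrix (Fin n) (Fin n) F) (hT : SLT T)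
    (r₁ r₂ : Fin n) (h12 : r₁ < r₂)
    (hrow : ∀ j : Fin n, r₁ ≤ j → T r₂ j = 0)
    (hcol : ∀ r : Fin n, r₁ < r → r < r₂ → T r r₁ = 0)
    (S : Matrix (Fin n) (Fin n) F)
    (hS : ∀ r k : Fin n, S r k = T (Equiv.swap r₁ r₂ r) (Equiv.swap r₁ r₂ k)) :
    ∃ e : NTAlg T ≃ₐ[F] NTAlg S,
      e (ntGen T r₁) = ntGen S r₂ ∧ e (ntGen T r₂) = ntGen S r₁ ∧
      ∀ r : Fin n, r ≠ r₁ → r ≠ r₂ → e (ntGen T r) = ntGen S r := by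
  have hS' : ∀ a b, S (Equiv.swap r₁ r₂ a) (Equiv.swap r₁ r₂ b) = T a b := by
    simp [hS]
  have hσ : ∀ a b, T a b ≠ 0 → (b < a ↔ Equiv.swap r₁ r₂ b < Equiv.swap r₁ r₂ a) :=
    fun _ _ hab =>
      iff_of_true (hT.lt_of_ne_zero hab) (swap_lt_swap_of_ne_zero hT h12 hrow hcol hab)
  refine ⟨NTAlg.equivOfPerm _ hS' hσ, ?_, ?_, fun r h1 h2 => ?_⟩ <;>
    rw [NTAlg.equivOfPerm_ntGen]
  · rw [Equiv.swap_apply_left]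
  · rw [Equiv.swap_apply_right]
  · rw [Equiv.swap_apply_of_ne_of_ne h1 h2]

/-- The elementary triangular operation `F_{(r₁,r₂)}(T)` (swap rows and columns `r₁, r₂`,
under the stated restrictions) yields an isomorphic algebra, via the swap of generators. -/
theorem stmt5 {n : ℕ} (h2 : (2 : F) ≠ 0) (T : Matrix (Fin n) (Fin n) F) (hT : SLT T)
    (r₁ r₂ : Fin n) (h12 : r₁ < r₂)
    (hrow : ∀ j : Fin n, r₁ ≤ j → T r₂ j = 0)
    (hcol : ∀ r : Fin n, r₁ < r → r < r₂ → T r r₁ = 0)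
    (S : Matrix (Fin n) (Fin n) F)
    (hS : ∀ r k : Fin n, S r k = T (Equiv.swap r₁ r₂ r) (Equiv.swap r₁ r₂ k)) :
    ∃ e : NTAlg T ≃ₐ[F] NTAlg S,
      e (ntGen T r₁) = ntGen S r₂ ∧ e (ntGen T r₂) = ntGen S r₁ ∧
      ∀ r : Fin n, r ≠ r₁ → r ≠ r₂ → e (ntGen T r) = ntGen S r :=
  stmt5_general T hT r₁ r₂ h12 hrow hcol S hS
end
end

section
/- Let F be a field of characteristic ≠ 2, T = [t_{rk}] a strictly lower triangular n×n matrix over F, β ∈ F, and 1 ≤ k₀ < r₀ ≤ n with t_{r₀ j} = 0 for all j > k₀. Assume either k₀ = 1, or k₀ > 1 and t_{r₀ i} + t_{r₀ k₀} t_{k₀ i} = β t_{k₀ i} for all 1 ≤ i < k₀. Define S = [s_{rk}] by s_{r₀ k₀} = t_{r₀ k₀} − 2β, s_{r k₀} = t_{r k₀} + β t_{r r₀} for r > r₀, and s_{rk} = t_{rk} otherwise. Then A(T) ≅ A(S), via the map X_{r₀} ↦ β Y_{k₀} + Y_{r₀}, X_r ↦ Y_r for r ≠ r₀. -/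
open scoped BigOperators

noncomputable section

variable {F : Type} [Field F]

/-!
Under the substitution `X_{r₀} ↦ β Y_{k₀} + Y_{r₀}` the relation of `X_r` for `r < r₀` is untouched,
and for `r > r₀` the new term `β t_{r r₀} Y_{k₀} Y_r` is exactly the change of column `k₀`. For
`r = r₀`, the cross term `2β Y_{k₀} Y_{r₀}` is absorbed by the shift `s_{r₀ k₀} = t_{r₀ k₀} - 2β`,
and the remaining `β (β - t_{r₀ k₀}) Y_{k₀}²` is rewritten with the relation of `Y_{k₀}`, after
which the hypothesis on row `r₀` makes it cancel against `β ∑_{i<k₀} t_{r₀ i} Y_i Y_{k₀}`.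
The operation with `-β` undoes the one with `β`, and `S` satisfies its hypotheses, so the same
construction gives the inverse `Y_{r₀} ↦ -β X_{k₀} + X_{r₀}`.
-/

open Finset

section Development

variable {n : ℕ}

section Relations

variable {B : Type} [CommRing B] [Algebra F B]

def SatisfiesNTRelations (T : Matrix (Fin n) (Fin n) F) (v : Fin n → B) : Prop :=
  ∀ i, v i ^ 2 = (∑ j ∈ Iio i, T i j • v j) * v i

lemma aeval_ntIdeal_generator (T : Matrix (Fin n) (Fin n) F) (v : Fin n → B) (i : Fin n) :
    MvPolynomial.aeval v (MvPolynomial.X i ^ 2 - ∑ j ∈ univ.filter (fun j => j < i),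
      MvPolynomial.C (T i j) * MvPolynomial.X j * MvPolynomial.X i)
      = v i ^ 2 - (∑ j ∈ Iio i, T i j • v j) * v i := by
  simp [filter_gt_eq_Iio, sum_mul, Algebra.smul_def]

lemma ntGen_satisfiesNTRelations (T : Matrix (Fin n) (Fin n) F) :
    SatisfiesNTRelations T (ntGen T) := fun i => by
  rw [← sub_eq_zero, ← aeval_ntIdeal_generator,
    show ntGen T = Ideal.Quotient.mkₐ F (ntIdeal T) ∘ MvPolynomial.X from rfl,
    ← MvPolynomial.aeval_unique, Ideal.Quotient.mkₐ_eq_mk, Ideal.Quotient.eq_zero_iff_mem]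
  exact Ideal.subset_span ⟨i, rfl⟩

def ntLift (T : Matrix (Fin n) (Fin n) F) (v : Fin n → B) (hv : SatisfiesNTRelations T v) :
    NTAlg T →ₐ[F] B :=
  Ideal.Quotient.liftₐ (ntIdeal T) (MvPolynomial.aeval v) fun p hp => by
    refine Submodule.span_induction ?_ (map_zero _)
      (fun _ _ _ _ hx hy => by rw [map_add, hx, hy, add_zero])
      (fun _ _ _ hx => by rw [smul_eq_mul, map_mul, hx, mul_zero]) hp
    rintro _ ⟨i, rfl⟩
    rw [aeval_ntIdeal_generator, hv i, sub_self]

@[simp]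
lemma ntLift_ntGen (T : Matrix (Fin n) (Fin n) F) (v : Fin n → B) (hv : SatisfiesNTRelations T v)
    (i : Fin n) : ntLift T v hv (ntGen T i) = v i := by
  rw [ntLift, ntGen, Ideal.Quotient.liftₐ_apply]
  exact (Ideal.Quotient.lift_mk _ _ _).trans (MvPolynomial.aeval_X v i)

lemma ntAlg_algHom_ext {T : Matrix (Fin n) (Fin n) F} {f g : NTAlg T →ₐ[F] B}
    (h : ∀ i, f (ntGen T i) = g (ntGen T i)) : f = g :=
  Ideal.Quotient.algHom_ext F (MvPolynomial.algHom_ext h)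

end Relations

lemma Finset.sum_Iio_eq_add_sum_Iio {α M : Type*} [LinearOrder α] [LocallyFiniteOrderBot α]
    [AddCommMonoid M] {k r : α} (hkr : k < r) {g : α → M} (hg : ∀ j, k < j → g j = 0) :
    ∑ j ∈ Iio r, g j = g k + ∑ j ∈ Iio k, g j := by
  rw [← sum_subset (fun j hj => mem_Iio.2 ((mem_Iic.1 hj).trans_lt hkr))
      fun j _ hj => hg j (by simpa using hj),
    ← Iio_insert, sum_insert notMem_Iio_self]

section Operation

def elemTriangularOp (T : Matrix (Fin n) (Fin n) F) (r₀ k₀ : Fin n) (β : F) :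
    Matrix (Fin n) (Fin n) F :=
  Matrix.of fun r k =>
    if r = r₀ ∧ k = k₀ then T r₀ k₀ - 2 * β
    else if r₀ < r ∧ k = k₀ then T r k₀ + β * T r r₀
    else T r k

variable {T : Matrix (Fin n) (Fin n) F} {r₀ k₀ : Fin n} {β : F}

lemma elemTriangularOp_apply_self : elemTriangularOp T r₀ k₀ β r₀ k₀ = T r₀ k₀ - 2 * β := by
  simp [elemTriangularOp]

lemma elemTriangularOp_apply_of_ne {r k : Fin n} (hk : k ≠ k₀) :
    elemTriangularOp T r₀ k₀ β r k = T r k := by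
  simp [elemTriangularOp, hk]

lemma elemTriangularOp_apply_of_lt {r k : Fin n} (hr : r < r₀) :
    elemTriangularOp T r₀ k₀ β r k = T r k := by
  simp [elemTriangularOp, hr.ne, hr.not_gt]

lemma elemTriangularOp_apply_of_gt {r k : Fin n} (hr : r₀ < r) :
    elemTriangularOp T r₀ k₀ β r k = T r k + if k = k₀ then β * T r r₀ else 0 := by
  by_cases hk : k = k₀ <;> simp [elemTriangularOp, hr, hr.ne', hk]

lemma elemTriangularOp_elemTriangularOp_neg (hkr : k₀ ≠ r₀) :
    elemTriangularOp (elemTriangularOp T r₀ k₀ β) r₀ k₀ (-β) = T := by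
  ext r k
  rcases lt_trichotomy r r₀ with hr | rfl | hr
  · rw [elemTriangularOp_apply_of_lt hr, elemTriangularOp_apply_of_lt hr]
  · by_cases hk : k = k₀
    · rw [hk, elemTriangularOp_apply_self, elemTriangularOp_apply_self]
      ring
    · rw [elemTriangularOp_apply_of_ne hk, elemTriangularOp_apply_of_ne hk]
  · rw [elemTriangularOp_apply_of_gt hr, elemTriangularOp_apply_of_gt hr,
      elemTriangularOp_apply_of_ne hkr.symm]
    split_ifs <;> ring

structure AdmissibleTriangularOp (T : Matrix (Fin n) (Fin n) F) (r₀ k₀ : Fin n) (β : F) :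
    Prop where
  lt : k₀ < r₀
  row_eq_zero : ∀ j, k₀ < j → T r₀ j = 0
  row_add_mul : ∀ i, i < k₀ → T r₀ i + T r₀ k₀ * T k₀ i = β * T k₀ i

lemma AdmissibleTriangularOp.neg (h : AdmissibleTriangularOp T r₀ k₀ β) :
    AdmissibleTriangularOp (elemTriangularOp T r₀ k₀ β) r₀ k₀ (-β) where
  lt := h.lt
  row_eq_zero j hj := by rw [elemTriangularOp_apply_of_ne hj.ne', h.row_eq_zero j hj]
  row_add_mul i hi := by
    rw [elemTriangularOp_apply_of_ne hi.ne, elemTriangularOp_apply_self,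
      elemTriangularOp_apply_of_lt h.lt]
    linear_combination h.row_add_mul i hi

end Operation

section Transvection

variable {B : Type} [CommRing B] [Algebra F B]

def transvect (y : Fin n → B) (r₀ k₀ : Fin n) (β : F) : Fin n → B :=
  Function.update y r₀ (β • y k₀ + y r₀)

variable {y : Fin n → B} {r₀ k₀ : Fin n} {β : F}

lemma transvect_of_ne {i : Fin n} (hi : i ≠ r₀) : transvect y r₀ k₀ β i = y i :=
  Function.update_of_ne hi _ _

lemma sum_smul_transvect_of_notMem {s : Finset (Fin n)} (hs : r₀ ∉ s) (c : Fin n → F) :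
    ∑ j ∈ s, c j • transvect y r₀ k₀ β j = ∑ j ∈ s, c j • y j :=
  sum_congr rfl fun j hj => by rw [transvect_of_ne (ne_of_mem_of_not_mem hj hs)]

lemma sum_smul_transvect_of_mem {s : Finset (Fin n)} (hs : r₀ ∈ s) (c : Fin n → F) :
    ∑ j ∈ s, c j • transvect y r₀ k₀ β j = ∑ j ∈ s, c j • y j + (c r₀ * β) • y k₀ := by
  rw [← add_sum_erase _ _ hs, ← add_sum_erase _ _ hs,
    sum_smul_transvect_of_notMem (notMem_erase r₀ s), transvect, Function.update_self,
    smul_add, mul_smul]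
  abel

variable {T : Matrix (Fin n) (Fin n) F}

lemma AdmissibleTriangularOp.transvect_sq_pivot (h : AdmissibleTriangularOp T r₀ k₀ β)
    (hy : SatisfiesNTRelations (elemTriangularOp T r₀ k₀ β) y) :
    transvect y r₀ k₀ β r₀ ^ 2 = (∑ j ∈ Iio r₀, T r₀ j • transvect y r₀ k₀ β j) *
      transvect y r₀ k₀ β r₀ := by
  rw [sum_smul_transvect_of_notMem notMem_Iio_self, sum_Iio_eq_add_sum_Iio h.lt fun j hj => by
    rw [h.row_eq_zero j hj, zero_smul], transvect, Function.update_self]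
  set P := ∑ j ∈ Iio k₀, T r₀ j • y j
  set K := ∑ j ∈ Iio k₀, T k₀ j • y j
  have hR : y r₀ ^ 2 = ((T r₀ k₀ - 2 * β) • y k₀ + P) * y r₀ := by
    rw [hy r₀, sum_Iio_eq_add_sum_Iio h.lt fun j hj => by
      rw [elemTriangularOp_apply_of_ne hj.ne', h.row_eq_zero j hj, zero_smul],
      elemTriangularOp_apply_self]
    congr 2
    exact sum_congr rfl fun j hj => by rw [elemTriangularOp_apply_of_ne (mem_Iio.1 hj).ne]
  have hK : y k₀ ^ 2 = K * y k₀ := by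
    rw [hy k₀]
    congr 1
    exact sum_congr rfl fun j _ => by rw [elemTriangularOp_apply_of_lt h.lt]
  have hPK : P + T r₀ k₀ • K = β • K := by
    simp only [P, K, smul_sum, smul_smul, ← sum_add_distrib, ← add_smul]
    exact sum_congr rfl fun j hj => by rw [h.row_add_mul j (mem_Iio.1 hj)]
  clear_value P K
  simp only [Algebra.smul_def, map_sub, map_mul, map_ofNat] at hR hPK ⊢
  linear_combination
    hR + algebraMap F B β * (algebraMap F B β - algebraMap F B (T r₀ k₀)) * hK
      - algebraMap F B β * y k₀ * hPK

lemma AdmissibleTriangularOp.satisfiesNTRelations_transvect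
    (h : AdmissibleTriangularOp T r₀ k₀ β)
    (hy : SatisfiesNTRelations (elemTriangularOp T r₀ k₀ β) y) :
    SatisfiesNTRelations T (transvect y r₀ k₀ β) := by
  intro i
  rcases lt_trichotomy i r₀ with hi | rfl | hi
  · rw [transvect_of_ne hi.ne, sum_smul_transvect_of_notMem (by simpa using hi.not_gt), hy i]
    exact congrArg (· * y i) (sum_congr rfl fun j _ => by rw [elemTriangularOp_apply_of_lt hi])
  · exact h.transvect_sq_pivot hy
  · rw [transvect_of_ne hi.ne', sum_smul_transvect_of_mem (mem_Iio.2 hi), hy i]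
    simp only [elemTriangularOp_apply_of_gt hi, add_smul, ite_smul, zero_smul, sum_add_distrib,
      sum_ite_eq', mem_Iio, if_pos (h.lt.trans hi), mul_comm]

end Transvection

section Isomorphism

variable {r₀ k₀ : Fin n} {β : F}

lemma map_transvect_neg {A B : Type} [CommRing A] [CommRing B] [Algebra F A] [Algebra F B]
    (φ : A →ₐ[F] B) {x : Fin n → A} {y : Fin n → B} (hkr : k₀ ≠ r₀)
    (hφ : ∀ i, φ (x i) = transvect y r₀ k₀ β i) (i : Fin n) :
    φ (transvect x r₀ k₀ (-β) i) = y i := by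
  by_cases hi : i = r₀
  · subst hi
    rw [transvect, Function.update_self, map_add, map_smul, hφ, hφ, transvect_of_ne hkr,
      transvect, Function.update_self, neg_smul]
    abel
  · rw [transvect_of_ne hi, hφ, transvect_of_ne hi]

variable {T : Matrix (Fin n) (Fin n) F}

def AdmissibleTriangularOp.ntAlgEquiv (h : AdmissibleTriangularOp T r₀ k₀ β) :
    NTAlg T ≃ₐ[F] NTAlg (elemTriangularOp T r₀ k₀ β) :=
  have hf := h.satisfiesNTRelations_transvect (ntGen_satisfiesNTRelations _)
  have hg : SatisfiesNTRelations (elemTriangularOp T r₀ k₀ β)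
      (transvect (ntGen T) r₀ k₀ (-β)) := by
    refine h.neg.satisfiesNTRelations_transvect ?_
    rw [elemTriangularOp_elemTriangularOp_neg h.lt.ne]
    exact ntGen_satisfiesNTRelations T
  AlgEquiv.ofAlgHom (ntLift T _ hf) (ntLift _ _ hg)
    (ntAlg_algHom_ext fun i => by
      simpa only [AlgHom.comp_apply, ntLift_ntGen, AlgHom.id_apply] using
        map_transvect_neg _ h.lt.ne (ntLift_ntGen T _ hf) i)
    (ntAlg_algHom_ext fun i => by
      simpa only [AlgHom.comp_apply, ntLift_ntGen, AlgHom.id_apply, neg_neg] using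
        map_transvect_neg _ h.lt.ne (ntLift_ntGen _ _ hg) i)

lemma AdmissibleTriangularOp.ntAlgEquiv_ntGen (h : AdmissibleTriangularOp T r₀ k₀ β)
    (i : Fin n) :
    h.ntAlgEquiv (ntGen T i) = transvect (ntGen (elemTriangularOp T r₀ k₀ β)) r₀ k₀ β i :=
  ntLift_ntGen T _ (h.satisfiesNTRelations_transvect (ntGen_satisfiesNTRelations _)) i

end Isomorphism

end Development

theorem stmt6_general {n : ℕ} (T : Matrix (Fin n) (Fin n) F)
    (k₀ r₀ : Fin n) (hk : k₀ < r₀) (β : F)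
    (hzero : ∀ j : Fin n, k₀ < j → T r₀ j = 0)
    (hcond : k₀.val = 0 ∨ (0 < k₀.val ∧
      ∀ i : Fin n, i < k₀ → T r₀ i + T r₀ k₀ * T k₀ i = β * T k₀ i))
    (S : Matrix (Fin n) (Fin n) F)
    (hS : ∀ r k : Fin n, S r k =
      if r = r₀ ∧ k = k₀ then T r₀ k₀ - 2 * β
      else if r₀ < r ∧ k = k₀ then T r k₀ + β * T r r₀
      else T r k) :
    ∃ e : NTAlg T ≃ₐ[F] NTAlg S,
      e (ntGen T r₀) = β • ntGen S k₀ + ntGen S r₀ ∧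
      ∀ r : Fin n, r ≠ r₀ → e (ntGen T r) = ntGen S r := by
  have h : AdmissibleTriangularOp T r₀ k₀ β :=
    ⟨hk, hzero, fun i hi => hcond.elim (fun h0 => absurd hi (by simp [Fin.lt_def, h0]))
      fun h => h.2 i hi⟩
  obtain rfl : S = elemTriangularOp T r₀ k₀ β := Matrix.ext hS
  refine ⟨h.ntAlgEquiv, ?_, fun r hr => ?_⟩
  · rw [h.ntAlgEquiv_ntGen, transvect, Function.update_self]
  · rw [h.ntAlgEquiv_ntGen, transvect_of_ne hr]

/-- The elementary triangular operation `Q_{(r₀,k₀)}(T, β)` (under the stated restrictions)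
yields an isomorphic algebra, via `X_{r₀} ↦ β Y_{k₀} + Y_{r₀}`, `X_r ↦ Y_r` for `r ≠ r₀`. -/
theorem stmt6 {n : ℕ} (h2 : (2 : F) ≠ 0) (T : Matrix (Fin n) (Fin n) F) (hT : SLT T)
    (k₀ r₀ : Fin n) (hk : k₀ < r₀) (β : F)
    (hzero : ∀ j : Fin n, k₀ < j → T r₀ j = 0)
    (hcond : k₀.val = 0 ∨ (0 < k₀.val ∧
      ∀ i : Fin n, i < k₀ → T r₀ i + T r₀ k₀ * T k₀ i = β * T k₀ i))
    (S : Matrix (Fin n) (Fin n) F)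
    (hS : ∀ r k : Fin n, S r k =
      if r = r₀ ∧ k = k₀ then T r₀ k₀ - 2 * β
      else if r₀ < r ∧ k = k₀ then T r k₀ + β * T r r₀
      else T r k) :
    ∃ e : NTAlg T ≃ₐ[F] NTAlg S,
      e (ntGen T r₀) = β • ntGen S k₀ + ntGen S r₀ ∧
      ∀ r : Fin n, r ≠ r₀ → e (ntGen T r) = ntGen S r :=
  stmt6_general T k₀ r₀ hk β hzero hcond S hS
end
end

section
/- Let F be a field of characteristic ≠ 2 and U = [u_{ij}] an n×n strictly lower triangular matrix over F. Suppose there is a degree-preserving F-algebra isomorphism A(0_n) → A(U) (i.e., one induced by an invertible linear map on the span of the generators). Then for every pair of indices 1 < j < k ≤ n with u_{kj} ≠ 0 and every 1 ≤ i < j, one has 2u_{ki} + u_{kj} u_{ji} = 0. -/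
open scoped BigOperators

noncomputable section

variable {F : Type} [Field F]

/-!
Write `e (X j) = ∑ i, Γ i j • Y i`. Since `X j ^ 2 = 0`, every column `a` of `Γ` gives a linear
form with `(∑ a i • Y i) ^ 2 = 0` in `A(U)`. Every element of the defining ideal of `A(U)` has no
terms of degree `< 2`, and its quadratic coefficients satisfy
`coeff (Y i * Y l) + u l i * coeff (Y l ^ 2) = 0` for `i < l`, because each generator does; hence
`2 a i a l + u l i a l ^ 2 = 0`. Composing `e` with the algebra maps `A(T) → F[ε]`,
`Y i ↦ c i • ε`, shows that no nonzero row vector is killed by `Γ`, so some column has `a k ≠ 0`.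
Then `u k j ≠ 0` forces `a j ≠ 0`, and eliminating `a i` between the relations for the pairs
`(j, k)`, `(i, k)`, `(i, j)` gives `(2 u k i + u k j u j i) a j a k ^ 2 = 0`.
-/

open MvPolynomial DualNumber
open scoped Matrix

variable {n : ℕ}

lemma Finsupp.single_add_single_eq_single_two_iff {σ : Type*} {t s l : σ} :
    single t 1 + single s 1 = single l (2 : ℕ) ↔ t = l ∧ s = l := by
  classical
  constructor
  · intro h
    have ht := DFunLike.congr_fun h t
    have hs := DFunLike.congr_fun h s
    simp only [add_apply, single_apply] at ht hs
    grind
  · rintro ⟨rfl, rfl⟩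
    rw [← single_add]

lemma MvPolynomial.coeff_mul_eq_coeff_zero_mul {σ R : Type*} [CommSemiring R] {m : ℕ}
    {g : MvPolynomial σ R} (hg : ∀ d : σ →₀ ℕ, d.degree < m → coeff d g = 0)
    (r : MvPolynomial σ R) {d : σ →₀ ℕ} (hd : d.degree ≤ m) :
    coeff d (r * g) = coeff 0 r * coeff d g := by
  classical
  rw [coeff_mul, Finset.sum_eq_single (0, d) _ (by simp)]
  rintro ⟨u, v⟩ huv hne
  replace huv : u + v = d := Finset.HasAntidiagonal.mem_antidiagonal.mp huv
  have hu : u ≠ 0 := by rintro rfl; simp_all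
  have hu_deg : 0 < u.degree := Nat.pos_of_ne_zero (mt (Finsupp.degree_eq_zero_iff u).mp hu)
  have hv_deg : v.degree < m := by
    have := congrArg Finsupp.degree huv
    rw [map_add] at this
    omega
  rw [hg v hv_deg, mul_zero]

section Coefficients

variable {σ R : Type*} [CommSemiring R] [DecidableEq σ]

lemma coeff_X_mul_X_pair {i l : σ} (hil : i ≠ l) (t s : σ) :
    coeff (Finsupp.single i 1 + Finsupp.single l 1) (X t * X s : MvPolynomial σ R) =
      (if t = i ∧ s = l then 1 else 0) + (if t = l ∧ s = i then 1 else 0) := by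
  simp only [X, monomial_mul, coeff_monomial, mul_one,
    Finsupp.single_add_single_eq_single_add_single one_ne_zero one_ne_zero]
  by_cases h : t = i ∧ s = l
  · simp [h, hil]
  · simp [h]

lemma coeff_X_mul_X_diag (l t s : σ) :
    coeff (Finsupp.single l 2) (X t * X s : MvPolynomial σ R) =
      if t = l ∧ s = l then 1 else 0 := by
  simp only [X, monomial_mul, coeff_monomial, mul_one, Finsupp.single_add_single_eq_single_two_iff]

variable [Fintype σ]

lemma coeff_linear_sq_pair (a : σ → R) {i l : σ} (hil : i ≠ l) :
    coeff (Finsupp.single i 1 + Finsupp.single l 1) ((∑ t, a t • X t : MvPolynomial σ R) ^ 2) =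
      2 * (a i * a l) := by
  simp [sq, Finset.sum_mul_sum, coeff_sum, coeff_X_mul_X_pair hil, mul_add, ite_and,
    Finset.sum_add_distrib]
  ring

lemma coeff_linear_sq_diag (a : σ → R) (l : σ) :
    coeff (Finsupp.single l 2) ((∑ t, a t • X t : MvPolynomial σ R) ^ 2) = a l * a l := by
  simp [sq, Finset.sum_mul_sum, coeff_sum, coeff_X_mul_X_diag, ite_and]

end Coefficients

def ntRelIdeal (T : Matrix (Fin n) (Fin n) F) : Ideal (MvPolynomial (Fin n) F) where
  carrier := {p | (∀ d : Fin n →₀ ℕ, d.degree < 2 → coeff d p = 0) ∧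
    ∀ i l, i < l → coeff (Finsupp.single i 1 + Finsupp.single l 1) p +
      T l i * coeff (Finsupp.single l 2) p = 0}
  zero_mem' := by simp
  add_mem' := by
    rintro p q ⟨hp, hp'⟩ ⟨hq, hq'⟩
    refine ⟨fun d hd => by simp [hp d hd, hq d hd], fun i l hil => ?_⟩
    simp only [coeff_add]
    linear_combination hp' i l hil + hq' i l hil
  smul_mem' := by
    rintro r p ⟨hp, hp'⟩
    simp only [smul_eq_mul, Set.mem_ofPred_eq]
    refine ⟨fun d hd => by rw [coeff_mul_eq_coeff_zero_mul hp r hd.le, hp d hd, mul_zero],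
      fun i l hil => ?_⟩
    rw [coeff_mul_eq_coeff_zero_mul hp r (by simp), coeff_mul_eq_coeff_zero_mul hp r (by simp)]
    linear_combination coeff 0 r * hp' i l hil

lemma ntIdeal_le_ntRelIdeal (T : Matrix (Fin n) (Fin n) F) : ntIdeal T ≤ ntRelIdeal T := by
  refine Ideal.span_le.mpr ?_
  rintro _ ⟨m, rfl⟩
  have hhom : IsHomogeneous (X m ^ 2 - ∑ j ∈ Finset.univ.filter (fun j => j < m),
      C (T m j) * X j * X m : MvPolynomial (Fin n) F) 2 :=
    ((isHomogeneous_X F m).pow 2).sub (IsHomogeneous.sum _ _ _ fun j _ =>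
      (((isHomogeneous_C _ _).mul (isHomogeneous_X F j)).mul (isHomogeneous_X F m)))
  refine ⟨fun d hd => hhom.coeff_eq_zero hd.ne, fun i l hil => ?_⟩
  rcases eq_or_ne m l with rfl | hml
  · simp [sq, mul_assoc, coeff_sum, coeff_C_mul, coeff_X_mul_X_pair hil.ne, coeff_X_mul_X_diag,
      hil.ne', mul_ite, Finset.sum_ite_eq', hil]
  · have hli : l < m → m ≠ i := fun hlm hmi => (hmi ▸ hlm).not_gt hil
    simp +contextual [sq, mul_assoc, coeff_sum, coeff_C_mul, coeff_X_mul_X_pair hil.ne,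
      coeff_X_mul_X_diag, hml, hli, mul_ite, ite_and, Finset.sum_ite_eq']

lemma ntGen_zero_sq (j : Fin n) : ntGen (0 : Matrix (Fin n) (Fin n) F) j ^ 2 = 0 := by
  rw [ntGen, ← map_pow, Ideal.Quotient.eq_zero_iff_mem]
  exact Ideal.subset_span ⟨j, by simp⟩

lemma two_mul_add_mul_eq_zero_of_sq_eq_zero (S : Matrix (Fin n) (Fin n) F) (a : Fin n → F)
    (h : (∑ t, a t • ntGen S t) ^ 2 = 0) {i l : Fin n} (hil : i < l) :
    2 * (a i * a l) + S l i * (a l * a l) = 0 := by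
  have hmem : (∑ t, a t • X t : MvPolynomial (Fin n) F) ^ 2 ∈ ntIdeal S := by
    rw [← Ideal.Quotient.eq_zero_iff_mem, ← Ideal.Quotient.mkₐ_eq_mk F, map_pow, map_sum]
    simp only [map_smul, Ideal.Quotient.mkₐ_eq_mk]
    exact h
  simpa [coeff_linear_sq_pair a hil.ne, coeff_linear_sq_diag] using
    (ntIdeal_le_ntRelIdeal S hmem).2 i l hil

-- Well defined for every `T`: all relations of `A(T)` are quadratic and `ε * ε = 0`.
def ntToDual (T : Matrix (Fin n) (Fin n) F) (c : Fin n → F) : NTAlg T →ₐ[F] DualNumber F :=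
  Ideal.Quotient.liftₐ (ntIdeal T) (aeval fun i => c i • ε) <| by
    refine fun p hp => Submodule.span_induction ?_ (map_zero _)
      (fun _ _ _ _ hx hy => by rw [map_add, hx, hy, add_zero])
      (fun r x _ hx => by rw [smul_eq_mul, map_mul, hx, mul_zero]) hp
    rintro _ ⟨m, rfl⟩
    simp [sq, mul_assoc, eps_mul_eps]

lemma ntToDual_mk (T : Matrix (Fin n) (Fin n) F) (c : Fin n → F) (p : MvPolynomial (Fin n) F) :
    ntToDual T c (Ideal.Quotient.mk _ p) = aeval (fun i => c i • ε) p :=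
  rfl

@[simp]
lemma ntToDual_ntGen (T : Matrix (Fin n) (Fin n) F) (c : Fin n → F) (i : Fin n) :
    ntToDual T c (ntGen T i) = c i • ε := by
  rw [ntGen, ntToDual_mk, aeval_X]

lemma snd_ntToDual_zero (T : Matrix (Fin n) (Fin n) F) (x : NTAlg T) :
    (ntToDual T 0 x).snd = 0 := by
  obtain ⟨p, rfl⟩ := Ideal.Quotient.mk_surjective x
  simp [ntToDual_mk, TrivSqZeroExt.algebraMap_eq_inl]

section DegreePreservingIso

variable {T S : Matrix (Fin n) (Fin n) F} (e : NTAlg T ≃ₐ[F] NTAlg S)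
  (Γ : Matrix (Fin n) (Fin n) F) (hΓ : ∀ j, e (ntGen T j) = ∑ i, Γ i j • ntGen S i)
include hΓ

lemma ntToDual_comp (c : Fin n → F) :
    (ntToDual S c).comp e.toAlgHom = ntToDual T (c ᵥ* Γ) := by
  refine Ideal.Quotient.algHom_ext _ (MvPolynomial.algHom_ext fun j => ?_)
  change ntToDual S c (e (ntGen T j)) = ntToDual T _ (ntGen T j)
  simp [hΓ, Matrix.vecMul, dotProduct, Finset.sum_smul, mul_smul, mul_comm]

lemma vecMul_ne_zero_of_map_ntGen {c : Fin n → F} (hc : c ≠ 0) : c ᵥ* Γ ≠ 0 := by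
  intro h
  obtain ⟨k, hk⟩ := Function.ne_iff.mp hc
  obtain ⟨x, hx⟩ := e.surjective (ntGen S k)
  have := congrArg (fun f : NTAlg T →ₐ[F] DualNumber F => (f x).snd) (ntToDual_comp e Γ hΓ c)
  exact hk (by simpa [hx, h, snd_ntToDual_zero] using this)

end DegreePreservingIso

theorem stmt12_general {n : ℕ} (U : Matrix (Fin n) (Fin n) F)
    (hiso : NTIso (0 : Matrix (Fin n) (Fin n) F) U) :
    ∀ i j k : Fin n, i < j → j < k → U k j ≠ 0 →
      2 * U k i + U k j * U j i = 0 := by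
  intro i j k hij hjk hkj
  obtain ⟨e, Γ, hΓ⟩ := hiso
  obtain ⟨c, hc⟩ : ∃ c, Γ k c ≠ 0 := by
    have hk : (Pi.single k 1 : Fin n → F) ≠ 0 := by simp
    simpa [Matrix.single_one_vecMul, funext_iff] using vecMul_ne_zero_of_map_ntGen e Γ hΓ hk
  have hsq : (∑ t, Γ t c • ntGen U t) ^ 2 = 0 := by
    rw [← hΓ, ← map_pow, ntGen_zero_sq, map_zero]
  have rel : ∀ {a b : Fin n}, a < b → 2 * (Γ a c * Γ b c) + U b a * (Γ b c * Γ b c) = 0 :=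
    two_mul_add_mul_eq_zero_of_sq_eq_zero U _ hsq
  have hjc : Γ j c ≠ 0 := by
    intro h
    apply mul_ne_zero hkj (mul_self_ne_zero.mpr hc)
    linear_combination rel hjk - 2 * Γ k c * h
  have key : (2 * U k i + U k j * U j i) * (Γ j c * (Γ k c * Γ k c)) = 0 := by
    linear_combination (2 * Γ j c) * rel (hij.trans hjk) + (U j i * Γ j c) * rel hjk
      - (2 * Γ k c) * rel hij
  exact (mul_eq_zero.mp key).resolve_right (mul_ne_zero hjc (mul_self_ne_zero.mpr hc))

/-- If there is a degree-preserving isomorphism `A(0ₙ) → A(U)`, then for all `i < j < k`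
with `u_{kj} ≠ 0`, one has `2u_{ki} + u_{kj} u_{ji} = 0`. -/
theorem stmt12 {n : ℕ} (h2 : (2 : F) ≠ 0) (U : Matrix (Fin n) (Fin n) F) (hU : SLT U)
    (hiso : NTIso (0 : Matrix (Fin n) (Fin n) F) U) :
    ∀ i j k : Fin n, i < j → j < k → U k j ≠ 0 →
      2 * U k i + U k j * U j i = 0 :=
  stmt12_general U hiso
end
end

section
/- Let F be a field of characteristic ≠ 2 and U = [u_{ij}] an n×n strictly lower triangular matrix over F. Define a leader of U to be a pair (k,j) with u_{kj} ≠ 0 and u_{kc} = 0 for all c > j. Suppose for every leader (r,j) of U with j > 1 and every i < j one has 2u_{ri} + u_{rj} u_{ji} = 0. Then for every pair (r,c) with 1 < c < j and u_{rc} ≠ 0 (where (r,j) is a leader), and every i < c, one has 2u_{ri} + u_{rc} u_{ci} = 0. -/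
open scoped BigOperators

noncomputable section

variable {F : Type} [Field F]

/-- `(k, j)` is a leader of `U`: the last nonzero entry of row `k` is in column `j`. -/
def IsLeader {n : ℕ} (U : Matrix (Fin n) (Fin n) F) (k j : Fin n) : Prop :=
  U k j ≠ 0 ∧ ∀ c : Fin n, j < c → U k c = 0

/-- If the vanishing condition `2u_{ri} + u_{rj}u_{ji} = 0` holds below every leader `(r,j)`
with `j > 1`, then it propagates to every nonzero entry `(r,c)` with `1 < c < j`. -/
theorem stmt13 {n : ℕ} (h2 : (2 : F) ≠ 0) (U : Matrix (Fin n) (Fin n) F) (hU : SLT U)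
    (hyp : ∀ r j : Fin n, IsLeader U r j → 0 < j.val →
      ∀ i : Fin n, i < j → 2 * U r i + U r j * U j i = 0) :
    ∀ r j c : Fin n, IsLeader U r j → 0 < c.val → c < j → U r c ≠ 0 →
      ∀ i : Fin n, i < c → 2 * U r i + U r c * U c i = 0 := by
  suffices main : ∀ N : ℕ, ∀ r : Fin n, r.val < N → ∀ j c : Fin n,
      IsLeader U r j → 0 < c.val → c < j → U r c ≠ 0 →
      ∀ i : Fin n, i < c → 2 * U r i + U r c * U c i = 0 by
    intro r j c h1 h2' h3 h4 i h5
    exact main (r.val + 1) r (Nat.lt_succ_self _) j c h1 h2' h3 h4 i h5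
  intro N
  induction N with
  | zero => intro r hr; omega
  | succ N IH =>
    classical
    intro r hr j c hlead hc hcj hrc i hic
    have hcj' : c.val < j.val := hcj
    have hic' : i.val < c.val := hic
    have hj0 : 0 < j.val := by omega
    have hjr : j < r := by
      by_contra h
      exact hlead.1 (hU r j (not_lt.mp h))
    have A := hyp r j hlead hj0 i (lt_trans hic hcj)
    have B := hyp r j hlead hj0 c hcj
    have hjc : U j c ≠ 0 := by
      intro h0
      rw [h0, mul_zero, add_zero] at B
      exact hrc ((mul_eq_zero.mp B).resolve_left h2)
    have hs : (Finset.univ.filter (fun c' => U j c' ≠ 0)).Nonempty :=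
      ⟨c, by simp [hjc]⟩
    set m := (Finset.univ.filter (fun c' => U j c' ≠ 0)).max' hs with hm
    have hmem : U j m ≠ 0 := by
      have := (Finset.univ.filter (fun c' => U j c' ≠ 0)).max'_mem hs
      simpa using this
    have hleadj : IsLeader U j m := by
      refine ⟨hmem, fun c' hc' => ?_⟩
      by_contra h0
      have : c' ≤ m := Finset.le_max' _ c' (by simp [h0])
      exact absurd hc' (not_lt.mpr this)
    have hcm : c ≤ m := Finset.le_max' _ c (by simp [hjc])
    have C : 2 * U j i + U j c * U c i = 0 := by
      rcases eq_or_lt_of_le hcm with he | hlt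
      · have := hyp j m hleadj (by omega : 0 < m.val) i
          (lt_of_lt_of_le hic hcm)
        rw [← he] at this
        exact this
      · have hjN : j.val < N := by
          have : j.val < r.val := hjr
          omega
        exact IH j hjN m c hleadj hc hlt hjc i hic
    have key : 2 * (2 * U r i + U r c * U c i) = 0 := by
      linear_combination 2 * A + U c i * B - U r j * C
    exact (mul_eq_zero.mp key).resolve_left h2
end
end

section
/- Let F be a field of characteristic ≠ 2, n ≥ 2, and 1 < l < m < n. Let B_{n,l} denote the n×n matrix with entries 1 in positions (n,1),…,(n,l) and 0 elsewhere, and similarly B_{n,m}. Then there is no degree-preserving F-algebra isomorphism A(B_{n,l}) → A(B_{n,m}). -/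
open scoped BigOperators

noncomputable section

variable {F : Type} [Field F]

/-- The matrix `B_{n,l}`: entries `1` in positions `(n, 1), …, (n, l)` (1-based), `0` elsewhere. -/
def Bnl (n l : ℕ) : Matrix (Fin n) (Fin n) F :=
  fun i j => if i.val = n - 1 ∧ j.val < l then (1 : F) else 0

/-!
An algebra map `A(T) → D` is the same as a point of `A(T)` in `D`: a tuple satisfying the
defining relations. A degree-preserving isomorphism `A(B_{n,l}) ≃ A(B_{n,m})` with matrix `Γ`
therefore pulls points `y` of `A(B_{n,m})` back to points `j ↦ ∑ i, Γ i j • y i` of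
`A(B_{n,l})`, and `Γ` is invertible (every tuple of infinitesimals in the dual numbers is a
point). Pulling back points with two nonzero coordinates `s, t` in `F[ε₁, ε₂]`, where `s² = 0`,
`t² ∈ {0, s t}` and `s t ≠ 0`, turns the relations into quadratic identities among the entries
of `Γ`: the last row of `Γ` vanishes off the diagonal, and every other column has at most one
nonzero entry. So at most `l` of the first `m` rows have a nonzero sum over the first `l`
columns; as `l < m`, some row `i < m` has zero sum, and the identities for `i` and for a second
row `i' < m` force `Γ n n = 0`, contradicting invertibility.
-/

open MvPolynomial Finset

section Points

variable {n : ℕ} {D E : Type*} [CommRing D] [Algebra F D] [CommRing E] [Algebra F E]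
  {T S : Matrix (Fin n) (Fin n) F}

def IsNTPoint (T : Matrix (Fin n) (Fin n) F) (x : Fin n → D) : Prop :=
  ∀ i, x i ^ 2 = ∑ j ∈ univ.filter (fun j => j < i), algebraMap F D (T i j) * x j * x i

lemma IsNTPoint.map {x : Fin n → D} (hx : IsNTPoint T x) (f : D →ₐ[F] E) :
    IsNTPoint T (f ∘ x) := fun i => by
  simpa [map_sum] using congrArg f (hx i)

lemma isNTPoint_of_mul_eq_zero {x : Fin n → D} (hx : ∀ i j, x i * x j = 0) :
    IsNTPoint T x := fun i => by
  simp [sq, hx, mul_assoc]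

lemma isNTPoint_ntGen (T : Matrix (Fin n) (Fin n) F) : IsNTPoint T (ntGen T) := fun i => by
  rw [← sub_eq_zero]
  have hrel :
      X i ^ 2 - ∑ j ∈ univ.filter (fun j => j < i), C (T i j) * X j * X i ∈ ntIdeal T :=
    Ideal.subset_span ⟨i, rfl⟩
  simp only [ntGen, ← Ideal.Quotient.mk_algebraMap, MvPolynomial.algebraMap_eq, ← map_pow,
    ← map_mul, ← map_sum, ← map_sub]
  exact Ideal.Quotient.eq_zero_iff_mem.mpr hrel

lemma IsNTPoint.ntIdeal_le_ker {x : Fin n → D} (hx : IsNTPoint T x) :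
    ntIdeal T ≤ RingHom.ker (aeval x) := by
  refine Ideal.span_le.mpr ?_
  rintro _ ⟨i, rfl⟩
  simp [hx i]

def IsNTPoint.lift {x : Fin n → D} (hx : IsNTPoint T x) : NTAlg T →ₐ[F] D :=
  Ideal.Quotient.liftₐ _ (aeval x) fun _ hp => hx.ntIdeal_le_ker hp

@[simp]
lemma IsNTPoint.lift_ntGen {x : Fin n → D} (hx : IsNTPoint T x) (i : Fin n) :
    hx.lift (ntGen T i) = x i :=
  aeval_X x i

def Matrix.pullback (Γ : Matrix (Fin n) (Fin n) F) (y : Fin n → D) : Fin n → D :=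
  fun j => ∑ i, Γ i j • y i

def PullsBackPoints (T S Γ : Matrix (Fin n) (Fin n) F) : Prop :=
  ∀ (D : Type) [CommRing D] [Algebra F D] (y : Fin n → D),
    IsNTPoint S y → IsNTPoint T (Γ.pullback y)

variable {Γ : Matrix (Fin n) (Fin n) F} (e : NTAlg T ≃ₐ[F] NTAlg S)

lemma pullsBackPoints_of_ntGen_map
    (he : ∀ j, e (ntGen T j) = ∑ i, Γ i j • ntGen S i) : PullsBackPoints T S Γ := by
  intro D _ _ y hy
  convert (isNTPoint_ntGen T).map (hy.lift.comp e.toAlgHom) using 1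
  funext j
  simp [Matrix.pullback, he]

lemma isUnit_of_ntGen_map
    (he : ∀ j, e (ntGen T j) = ∑ i, Γ i j • ntGen S i) : IsUnit Γ := by
  rw [← Matrix.vecMul_surjective_iff_isUnit]
  intro w
  have hx : IsNTPoint T (fun j => TrivSqZeroExt.inr (w j) : Fin n → DualNumber F) :=
    isNTPoint_of_mul_eq_zero fun i j => TrivSqZeroExt.inr_mul_inr _ _ _
  let φ := hx.lift.comp e.symm.toAlgHom
  refine ⟨fun i => (φ (ntGen S i)).snd, funext fun j => ?_⟩
  have := congrArg TrivSqZeroExt.snd (congrArg φ (he j))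
  simpa [φ, Matrix.vecMul, dotProduct, TrivSqZeroExt.snd_sum, mul_comm] using this.symm

end Points

lemma smul_add_smul_mul_smul_add_smul {D : Type*} [CommRing D] [Algebra F D] {s t : D} {κ : F}
    (hs : s ^ 2 = 0) (ht : t ^ 2 = κ • (s * t)) (a b c d : F) :
    (a • s + b • t) * (c • s + d • t) = (a * d + b * c + κ * (b * d)) • (s * t) := by
  simp only [Algebra.smul_def, map_add, map_mul] at *
  linear_combination (algebraMap F D a * algebraMap F D c) * hs +
    (algebraMap F D b * algebraMap F D d) * ht

lemma exists_sq_eq_zero_mul_ne_zero :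
    ∃ s t : DualNumber (DualNumber F), s ^ 2 = 0 ∧ t ^ 2 = 0 ∧ s * t ≠ 0 := by
  refine ⟨TrivSqZeroExt.inl DualNumber.eps, DualNumber.eps, ?_, DualNumber.eps_pow_two, ?_⟩
  · rw [TrivSqZeroExt.inl_pow, DualNumber.eps_pow_two, TrivSqZeroExt.inl_zero]
  · intro h
    simpa using congrArg (fun x => x.snd.snd) h

lemma exists_sq_eq_zero_sq_eq_mul (h2 : (2 : F) ≠ 0) :
    ∃ s t : DualNumber (DualNumber F), s ^ 2 = 0 ∧ t ^ 2 = s * t ∧ s * t ≠ 0 := by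
  obtain ⟨s, t, hs, ht, hst⟩ := exists_sq_eq_zero_mul_ne_zero (F := F)
  refine ⟨2 * s, s + t, by linear_combination 4 * hs, by linear_combination ht - hs, ?_⟩
  have h2st : 2 * s * (s + t) = (2 : F) • (s * t) := by
    rw [two_smul]
    linear_combination 2 * hs
  exact h2st ▸ smul_ne_zero h2 hst

lemma card_filter_sum_ne_zero_le {ι κ R : Type*} [DecidableEq ι] [NonUnitalNonAssocSemiring R]
    [NoZeroDivisors R] [DecidableEq R] (M : ι → κ → R) (I : Finset ι) (K : Finset κ)
    (hM : ∀ j ∈ K, ∀ a b, a ≠ b → M a j * M b j = 0) :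
    (I.filter fun i => ∑ j ∈ K, M i j ≠ 0).card ≤ K.card := by
  calc (I.filter fun i => ∑ j ∈ K, M i j ≠ 0).card
      ≤ (K.biUnion fun j => I.filter fun i => M i j ≠ 0).card := by
        refine card_le_card fun i hi => ?_
        rw [mem_filter] at hi
        obtain ⟨j, hj, hij⟩ := exists_ne_zero_of_sum_ne_zero hi.2
        exact mem_biUnion.mpr ⟨j, hj, mem_filter.mpr ⟨hi.1, hij⟩⟩
    _ ≤ ∑ j ∈ K, (I.filter fun i => M i j ≠ 0).card := card_biUnion_le
    _ ≤ ∑ _j ∈ K, 1 := by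
        refine sum_le_sum fun j hj => card_le_one.mpr fun a ha b hb => ?_
        by_contra hab
        exact (mem_filter.mp ha).2 <|
          (mul_eq_zero.mp (hM j hj a b hab)).resolve_right (mem_filter.mp hb).2
    _ = K.card := by simp

lemma IsUnit.matrix_apply_self_ne_zero {ι R : Type*} [Fintype ι] [DecidableEq ι] [CommRing R]
    [Nontrivial R] {A : Matrix ι ι R} (hA : IsUnit A) {i : ι} (hrow : ∀ j ≠ i, A i j = 0) :
    A i i ≠ 0 := fun h0 =>
  ((Matrix.isUnit_iff_isUnit_det A).mp hA).ne_zero <|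
    Matrix.det_eq_zero_of_row_eq_zero i fun j => by
      by_cases hj : j = i
      · rwa [hj]
      · exact hrow j hj

section Bnl

variable {k l m : ℕ} {D : Type*} [CommRing D] [Algebra F D]

lemma isNTPoint_Bnl_iff (hl : l ≤ k) {x : Fin (k + 1) → D} :
    IsNTPoint (Bnl (F := F) (k + 1) l) x ↔ (∀ i ≠ Fin.last k, x i ^ 2 = 0) ∧
      x (Fin.last k) ^ 2 =
        ∑ j ∈ univ.filter (fun j : Fin (k + 1) => (j : ℕ) < l), x j * x (Fin.last k) := by
  have hrel : ∀ i, ∑ j ∈ univ.filter (fun j => j < i),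
      algebraMap F D (Bnl (F := F) (k + 1) l i j) * x j * x i =
        if i = Fin.last k then
          ∑ j ∈ univ.filter (fun j : Fin (k + 1) => (j : ℕ) < l), x j * x (Fin.last k)
        else 0 := by
    intro i
    split_ifs with hi
    · subst hi
      rw [sum_filter, sum_filter]
      refine sum_congr rfl fun j _ => ?_
      by_cases hjl : (j : ℕ) < l
      · simp [Bnl, Fin.lt_def, hjl, show (j : ℕ) < k by omega]
      · simp [Bnl, hjl]
    · refine sum_eq_zero fun j _ => ?_
      simp [Bnl, (Fin.val_lt_last hi).ne]
  simp only [IsNTPoint, hrel]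
  constructor
  · intro h
    exact ⟨fun i hi => by simpa [hi] using h i, by simpa using h (Fin.last k)⟩
  · rintro ⟨h, hlast⟩ i
    by_cases hi : i = Fin.last k
    · subst hi; simpa using hlast
    · simpa [hi] using h i hi

lemma isNTPoint_Bnl_single_add_single (hm : m ≤ k) {a b : Fin (k + 1)} (hab : a ≠ b)
    (ha : a ≠ Fin.last k) (hb : b ≠ Fin.last k) {s t : D} (hs : s ^ 2 = 0) (ht : t ^ 2 = 0) :
    IsNTPoint (Bnl (F := F) (k + 1) m) (Pi.single a s + Pi.single b t : Fin (k + 1) → D) := by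
  rw [isNTPoint_Bnl_iff hm]
  refine ⟨fun i _ => ?_, by simp [ha.symm, hb.symm]⟩
  by_cases hia : i = a
  · subst hia; simp [hab, hs]
  · by_cases hib : i = b
    · subst hib; simp [hia, ht]
    · simp [hia, hib]

lemma isNTPoint_Bnl_single_add_single_last (hm : m ≤ k) {i : Fin (k + 1)} (hi : (i : ℕ) < m)
    {s t : D} (hs : s ^ 2 = 0) (ht : t ^ 2 = s * t) :
    IsNTPoint (Bnl (F := F) (k + 1) m)
      (Pi.single i s + Pi.single (Fin.last k) t : Fin (k + 1) → D) := by
  have hiL : i ≠ Fin.last k := Fin.lt_last_iff_ne_last.mp (show (i : ℕ) < k by omega)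
  rw [isNTPoint_Bnl_iff hm]
  refine ⟨fun r hr => ?_, ?_⟩
  · by_cases hri : r = i
    · subst hri; simp [hr, hs]
    · simp [hr, hri]
  · rw [sum_eq_single i]
    · simp [hiL, hiL.symm, ht]
    · intro j hj hji
      have hjL : j ≠ Fin.last k := by
        rintro rfl; simp at hj; omega
      simp [hji, hjL]
    · simp [hi]

lemma Matrix.pullback_single_add_single (Γ : Matrix (Fin (k + 1)) (Fin (k + 1)) F)
    (a b : Fin (k + 1)) (s t : D) :
    Γ.pullback (Pi.single a s + Pi.single b t : Fin (k + 1) → D) =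
      fun j => Γ a j • s + Γ b j • t := by
  funext j
  simp [Matrix.pullback, Pi.single_apply, smul_add, sum_add_distrib]

variable {Γ : Matrix (Fin (k + 1)) (Fin (k + 1)) F}

lemma PullsBackPoints.Bnl_relations_of_ne_last
    (hΓ : PullsBackPoints (Bnl (k + 1) l) (Bnl (k + 1) m) Γ) (hl : l ≤ k) (hm : m ≤ k)
    {D : Type} [CommRing D] [Algebra F D] (s t : D) (hs : s ^ 2 = 0) (ht : t ^ 2 = 0)
    (hst : s * t ≠ 0) {a b : Fin (k + 1)} (hab : a ≠ b) (ha : a ≠ Fin.last k)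
    (hb : b ≠ Fin.last k) :
    (∀ j ≠ Fin.last k, 2 * (Γ a j * Γ b j) = 0) ∧
      2 * (Γ a (Fin.last k) * Γ b (Fin.last k)) =
        (∑ j ∈ univ.filter (fun j : Fin (k + 1) => (j : ℕ) < l), Γ a j) * Γ b (Fin.last k) +
          (∑ j ∈ univ.filter (fun j : Fin (k + 1) => (j : ℕ) < l), Γ b j) *
            Γ a (Fin.last k) := by
  have hmul := smul_add_smul_mul_smul_add_smul (κ := (0 : F)) hs (by rw [zero_smul, ht])
  have hpt := hΓ D _ (isNTPoint_Bnl_single_add_single hm hab ha hb hs ht)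
  rw [Matrix.pullback_single_add_single, isNTPoint_Bnl_iff hl] at hpt
  simp only [sq, hmul, ← sum_smul] at hpt
  obtain ⟨hcol, hlast⟩ := hpt
  constructor
  · intro j hj
    linear_combination smul_left_injective F hst ((hcol j hj).trans (zero_smul F _).symm)
  · have := smul_left_injective F hst hlast
    simp only [zero_mul, add_zero, sum_add_distrib] at this
    rw [sum_mul, sum_mul]
    linear_combination this

lemma PullsBackPoints.Bnl_relations_of_lt
    (hΓ : PullsBackPoints (Bnl (k + 1) l) (Bnl (k + 1) m) Γ) (hl : l ≤ k) (hm : m ≤ k)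
    {D : Type} [CommRing D] [Algebra F D] (s t : D) (hs : s ^ 2 = 0) (ht : t ^ 2 = s * t)
    (hst : s * t ≠ 0) {i : Fin (k + 1)} (hi : (i : ℕ) < m) :
    (∀ j ≠ Fin.last k, Γ (Fin.last k) j * (2 * Γ i j + Γ (Fin.last k) j) = 0) ∧
      Γ (Fin.last k) (Fin.last k) * (2 * Γ i (Fin.last k) + Γ (Fin.last k) (Fin.last k)) =
        (∑ j ∈ univ.filter (fun j : Fin (k + 1) => (j : ℕ) < l), Γ i j) *
            Γ (Fin.last k) (Fin.last k) +
          (∑ j ∈ univ.filter (fun j : Fin (k + 1) => (j : ℕ) < l), Γ (Fin.last k) j) *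
            (Γ i (Fin.last k) + Γ (Fin.last k) (Fin.last k)) := by
  have hmul := smul_add_smul_mul_smul_add_smul (κ := (1 : F)) hs (by rw [one_smul, ht])
  have hpt := hΓ D _ (isNTPoint_Bnl_single_add_single_last hm hi hs ht)
  rw [Matrix.pullback_single_add_single, isNTPoint_Bnl_iff hl] at hpt
  simp only [sq, hmul, ← sum_smul] at hpt
  obtain ⟨hcol, hlast⟩ := hpt
  constructor
  · intro j hj
    linear_combination smul_left_injective F hst ((hcol j hj).trans (zero_smul F _).symm)
  · have := smul_left_injective F hst hlast
    simp only [one_mul, sum_add_distrib] at this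
    simp only [sum_mul, mul_add]
    linear_combination this


lemma PullsBackPoints.Bnl_last_row_eq_zero
    (hΓ : PullsBackPoints (Bnl (k + 1) l) (Bnl (k + 1) m) Γ) (h2 : (2 : F) ≠ 0) (hl : l ≤ k)
    (hm2 : 2 ≤ m) (hm : m ≤ k) {j : Fin (k + 1)} (hj : j ≠ Fin.last k) :
    Γ (Fin.last k) j = 0 := by
  obtain ⟨s, t, hs, ht, hst⟩ := exists_sq_eq_zero_mul_ne_zero (F := F)
  obtain ⟨s', t', hs', ht', hst'⟩ := exists_sq_eq_zero_sq_eq_mul h2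
  have of_eq_zero (i : Fin (k + 1)) (hi : (i : ℕ) < m) (hij : Γ i j = 0) :
      Γ (Fin.last k) j = 0 := by
    have := (hΓ.Bnl_relations_of_lt hl hm s' t' hs' ht' hst' hi).1 j hj
    rw [hij, mul_zero, zero_add] at this
    exact mul_self_eq_zero.mp this
  have h01 := (hΓ.Bnl_relations_of_ne_last hl hm s t hs ht hst
    (a := ⟨0, by omega⟩) (b := ⟨1, by omega⟩) (by simp [Fin.ext_iff])
    (Fin.lt_last_iff_ne_last.mp (show 0 < k by omega))
    (Fin.lt_last_iff_ne_last.mp (show 1 < k by omega))).1 j hj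
  rcases mul_eq_zero.mp ((mul_eq_zero.mp h01).resolve_left h2) with h | h
  exacts [of_eq_zero _ (by simp; omega) h, of_eq_zero _ (by simp; omega) h]

lemma PullsBackPoints.Bnl_mul_eq_zero
    (hΓ : PullsBackPoints (Bnl (k + 1) l) (Bnl (k + 1) m) Γ) (h2 : (2 : F) ≠ 0) (hl : l ≤ k)
    (hm2 : 2 ≤ m) (hm : m ≤ k) {j : Fin (k + 1)} (hj : j ≠ Fin.last k) {a b : Fin (k + 1)}
    (hab : a ≠ b) : Γ a j * Γ b j = 0 := by
  obtain ⟨s, t, hs, ht, hst⟩ := exists_sq_eq_zero_mul_ne_zero (F := F)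
  by_cases ha : a = Fin.last k
  · rw [ha, hΓ.Bnl_last_row_eq_zero h2 hl hm2 hm hj, zero_mul]
  by_cases hb : b = Fin.last k
  · rw [hb, hΓ.Bnl_last_row_eq_zero h2 hl hm2 hm hj, mul_zero]
  have h2ab := (hΓ.Bnl_relations_of_ne_last hl hm s t hs ht hst hab ha hb).1 j hj
  exact (mul_eq_zero.mp h2ab).resolve_left h2

lemma PullsBackPoints.Bnl_exists_rowSum_eq_zero
    (hΓ : PullsBackPoints (Bnl (k + 1) l) (Bnl (k + 1) m) Γ) (h2 : (2 : F) ≠ 0) (hlm : l < m)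
    (hm2 : 2 ≤ m) (hm : m ≤ k) :
    ∃ i : Fin (k + 1), (i : ℕ) < m ∧
      ∑ j ∈ univ.filter (fun j : Fin (k + 1) => (j : ℕ) < l), Γ i j = 0 := by
  classical
  by_contra! h
  have hcard := card_filter_sum_ne_zero_le Γ (univ.filter fun i : Fin (k + 1) => (i : ℕ) < m)
    (univ.filter fun j : Fin (k + 1) => (j : ℕ) < l) fun j hj a b hab =>
      hΓ.Bnl_mul_eq_zero h2 (by omega) hm2 hm
        (Fin.lt_last_iff_ne_last.mp (show (j : ℕ) < k by simp at hj; omega)) hab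
  rw [filter_true_of_mem fun i hi => h i (by simpa using hi)] at hcard
  simp only [Fin.card_filter_val_lt] at hcard
  omega

theorem PullsBackPoints.Bnl_not_isUnit
    (hΓ : PullsBackPoints (Bnl (k + 1) l) (Bnl (k + 1) m) Γ) (h2 : (2 : F) ≠ 0) (hlm : l < m)
    (hm2 : 2 ≤ m) (hm : m ≤ k) : ¬ IsUnit Γ := by
  intro hunit
  have hl : l ≤ k := by omega
  have ne_last : ∀ i : Fin (k + 1), (i : ℕ) < m → i ≠ Fin.last k := fun i hi =>
    Fin.lt_last_iff_ne_last.mp (show (i : ℕ) < k by omega)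
  obtain ⟨s, t, hs, ht, hst⟩ := exists_sq_eq_zero_mul_ne_zero (F := F)
  obtain ⟨s', t', hs', ht', hst'⟩ := exists_sq_eq_zero_sq_eq_mul h2
  have hrow : ∀ j ≠ Fin.last k, Γ (Fin.last k) j = 0 := fun j hj =>
    hΓ.Bnl_last_row_eq_zero h2 hl hm2 hm hj
  have hLL := hunit.matrix_apply_self_ne_zero hrow
  have hwL : ∑ j ∈ univ.filter (fun j : Fin (k + 1) => (j : ℕ) < l), Γ (Fin.last k) j = 0 :=
    sum_eq_zero fun j hj => hrow j (ne_last j (by simp at hj; omega))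
  obtain ⟨i, hi, hwi⟩ := hΓ.Bnl_exists_rowSum_eq_zero h2 hlm hm2 hm
  obtain ⟨i', hi', hii'⟩ :=
    exists_mem_ne (s := univ.filter fun i : Fin (k + 1) => (i : ℕ) < m)
      (by simp only [Fin.card_filter_val_lt]; omega) i
  rw [mem_filter] at hi'
  have hrel_i := (hΓ.Bnl_relations_of_lt hl hm s' t' hs' ht' hst' hi).2
  have hrel_i' := (hΓ.Bnl_relations_of_lt hl hm s' t' hs' ht' hst' hi'.2).2
  have hrel_ii' :=
    (hΓ.Bnl_relations_of_ne_last hl hm s t hs ht hst hii'.symm (ne_last i hi) (ne_last i' hi'.2)).2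
  rw [hwi, hwL] at hrel_i
  rw [hwL] at hrel_i'
  rw [hwi] at hrel_ii'
  have hi_last : 2 * Γ i (Fin.last k) + Γ (Fin.last k) (Fin.last k) = 0 :=
    (mul_eq_zero.mp (by linear_combination hrel_i)).resolve_left hLL
  have hi'_last : 2 * Γ i' (Fin.last k) + Γ (Fin.last k) (Fin.last k) =
      ∑ j ∈ univ.filter (fun j : Fin (k + 1) => (j : ℕ) < l), Γ i' j :=
    mul_left_cancel₀ hLL (by linear_combination hrel_i')
  have hp : Γ (Fin.last k) (Fin.last k) * Γ i (Fin.last k) = 0 := by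
    linear_combination Γ i (Fin.last k) * hi'_last - hrel_ii'
  exact hLL (by linear_combination hi_last - 2 * (mul_eq_zero.mp hp).resolve_left hLL)

end Bnl

theorem stmt15_general {n l m : ℕ} (h2 : (2 : F) ≠ 0)
    (hl : 1 < l) (hlm : l < m) (hm : m < n) :
    ¬ NTIso (Bnl n l : Matrix (Fin n) (Fin n) F) (Bnl n m : Matrix (Fin n) (Fin n) F) := by
  rintro ⟨e, Γ, he⟩
  obtain ⟨k, rfl⟩ : ∃ k, n = k + 1 := ⟨n - 1, by omega⟩
  exact (pullsBackPoints_of_ntGen_map e he).Bnl_not_isUnit h2 hlm (by omega) (by omega)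
    (isUnit_of_ntGen_map e he)

/-- For `1 < l < m < n`, there is no degree-preserving isomorphism
`A(B_{n,l}) → A(B_{n,m})`. -/
theorem stmt15 {n l m : ℕ} (h2 : (2 : F) ≠ 0) (hn : 2 ≤ n)
    (hl : 1 < l) (hlm : l < m) (hm : m < n) :
    ¬ NTIso (Bnl n l : Matrix (Fin n) (Fin n) F) (Bnl n m : Matrix (Fin n) (Fin n) F) :=
  stmt15_general h2 hl hlm hm
end
end
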